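/- arXiv:1703.03522 — 2 statements merged into one kernel-verified Lean document; each statement's English description precedes it below -/
import Mathlib

section
/- The number of subsets S of {t+1, t+2, ..., m−1} such that any two distinct elements of S differ by more than t equals x(m), where x(i) = 1 for 1 ≤ i ≤ t+1 and x(i) = x(i−t−1) + x(i−1) for i > t+1. -/
/-!
Sort the `t`-separated subsets of `[t+1, n)` by whether they contain `n - 1`. Those that do not
are the separated subsets of `[t+1, n-1)`; removing `n - 1` from those that do is a bijection
onto the separated subsets of `[t+1, n-1-t)`. So the counts obey the recurrence of `x`, and for
`n ≤ t + 1` the interval is empty and only `∅` is counted.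
-/

open Finset

def IsSeparated (t : ℕ) (S : Finset ℕ) : Prop :=
  ∀ a ∈ S, ∀ b ∈ S, a < b → t < b - a

instance (t : ℕ) : DecidablePred (IsSeparated t) := fun S => by
  unfold IsSeparated; infer_instance

def separatedSubsets (t : ℕ) (s : Finset ℕ) : Finset (Finset ℕ) :=
  s.powerset.filter (IsSeparated t)

namespace IsSeparated

variable {t : ℕ} {S T : Finset ℕ}

theorem mono (hST : S ⊆ T) (hT : IsSeparated t T) : IsSeparated t S :=
  fun a ha b hb hab => hT a (hST ha) b (hST hb) hab

theorem insert_of_forall_add_lt {k : ℕ} (hS : IsSeparated t S) (hk : ∀ a ∈ S, a + t < k) :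
    IsSeparated t (insert k S) := by
  intro a ha b hb hab
  rcases mem_insert.mp ha with rfl | ha' <;> rcases mem_insert.mp hb with rfl | hb'
  · omega
  · have := hk b hb'; omega
  · have := hk a ha'; omega
  · exact hS a ha' b hb' hab

end IsSeparated

@[simp]
theorem mem_separatedSubsets {t : ℕ} {s S : Finset ℕ} :
    S ∈ separatedSubsets t s ↔ S ⊆ s ∧ IsSeparated t S := by
  simp [separatedSubsets]

theorem separatedSubsets_empty (t : ℕ) : separatedSubsets t ∅ = {∅} := by
  ext S
  simp only [mem_separatedSubsets, subset_empty, mem_singleton, and_iff_left_iff_imp]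
  rintro rfl
  simp [IsSeparated]

theorem filter_notMem_separatedSubsets (t k : ℕ) (s : Finset ℕ) :
    (separatedSubsets t s).filter (k ∉ ·) = separatedSubsets t (s.erase k) := by
  ext S
  simp only [mem_filter, mem_separatedSubsets, subset_erase]
  tauto

theorem card_filter_mem_separatedSubsets {t k : ℕ} {s : Finset ℕ} (hks : k ∈ s)
    (hk : ∀ a ∈ s, a ≤ k) :
    ((separatedSubsets t s).filter (k ∈ ·)).card =
      (separatedSubsets t (s.filter (· + t < k))).card := by
  refine card_nbij' (fun S => S.erase k) (insert k) ?_ ?_ ?_ ?_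
  · intro S hS
    simp only [mem_coe, mem_filter, mem_separatedSubsets] at hS
    obtain ⟨⟨hSs, hSsep⟩, hkS⟩ := hS
    refine mem_separatedSubsets.mpr ⟨fun a ha => ?_, hSsep.mono (erase_subset k S)⟩
    obtain ⟨hak, haS⟩ := mem_erase.mp ha
    have hlt : a < k := lt_of_le_of_ne (hk a (hSs haS)) hak
    have := hSsep a haS k hkS hlt
    exact mem_filter.mpr ⟨hSs haS, by omega⟩
  · intro S hS
    simp only [mem_coe, mem_separatedSubsets, subset_iff, mem_filter] at hS
    refine mem_filter.mpr ⟨mem_separatedSubsets.mpr ⟨?_, ?_⟩, mem_insert_self k S⟩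
    · exact insert_subset hks fun a ha => (hS.1 ha).1
    · exact hS.2.insert_of_forall_add_lt fun a ha => (hS.1 ha).2
  · intro S hS
    exact insert_erase (mem_filter.mp hS).2
  · intro S hS
    refine erase_insert fun hkS => ?_
    have := (mem_filter.mp ((mem_separatedSubsets.mp hS).1 hkS)).2
    omega

theorem card_separatedSubsets_Ico_succ (t : ℕ) {l k : ℕ} (hlk : l ≤ k) :
    (separatedSubsets t (Ico l (k + 1))).card =
      (separatedSubsets t (Ico l k)).card + (separatedSubsets t (Ico l (k - t))).card := by
  have hks : k ∈ Ico l (k + 1) := mem_Ico.mpr ⟨hlk, k.lt_succ_self⟩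
  have hmax : ∀ a ∈ Ico l (k + 1), a ≤ k := fun a ha => Nat.lt_succ_iff.mp (mem_Ico.mp ha).2
  have herase : (Ico l (k + 1)).erase k = Ico l k := by
    rw [Nat.Ico_succ_right_eq_insert_Ico hlk, erase_insert right_notMem_Ico]
  have hbelow : (Ico l (k + 1)).filter (· + t < k) = Ico l (k - t) := by
    ext a; simp only [mem_filter, mem_Ico]; omega
  rw [← card_filter_add_card_filter_not (k ∈ ·), card_filter_mem_separatedSubsets hks hmax,
    filter_notMem_separatedSubsets, herase, hbelow, add_comm]

theorem card_separatedSubsets_Ico_eq (t : ℕ) {x : ℕ → ℕ}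
    (hbase : ∀ i, 1 ≤ i → i ≤ t + 1 → x i = 1)
    (hrec : ∀ i, i > t + 1 → x i = x (i - t - 1) + x (i - 1)) {n : ℕ} (hn : 1 ≤ n) :
    (separatedSubsets t (Ico (t + 1) n)).card = x n := by
  induction n using Nat.strong_induction_on with
  | _ n ih =>
  rcases le_or_gt n (t + 1) with hsmall | hlarge
  · rw [Ico_eq_empty_of_le hsmall, separatedSubsets_empty, card_singleton, hbase n hn hsmall]
  · obtain ⟨k, rfl⟩ : ∃ k, n = k + 1 := ⟨n - 1, by omega⟩
    rw [card_separatedSubsets_Ico_succ t (by omega), ih k (by omega) (by omega),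
      ih (k - t) (by omega) (by omega), hrec (k + 1) hlarge,
      show k + 1 - t - 1 = k - t by omega, Nat.add_sub_cancel, add_comm]

theorem stmt_5 (t m : ℕ) (hm : m ≥ t + 2) (x : ℕ → ℕ)
    (hbase : ∀ i, 1 ≤ i → i ≤ t + 1 → x i = 1)
    (hrec : ∀ i, i > t + 1 → x i = x (i - t - 1) + x (i - 1)) :
    (((Finset.Icc (t + 1) (m - 1)).powerset.filter
        (fun S => ∀ a ∈ S, ∀ b ∈ S, a < b → t < b - a)).card) = x m := by
  have hIcc : Icc (t + 1) (m - 1) = Ico (t + 1) m := by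
    ext a; simp only [mem_Icc, mem_Ico]; omega
  rw [hIcc]
  exact card_separatedSubsets_Ico_eq t hbase hrec (by omega)
end

section
/- The recursive procedure ED explores exactly the set of all valid error patterns: starting from ED(t+1, 0), the binary recursion where at index i one either includes i and jumps to i+t+1, or excludes i and moves to i+1, terminating when i ≥ m, produces each subset {i_1 < ... < i_r} ⊆ {t+1, ..., m−1} with gaps > t exactly once. -/
/-- The recursive enumeration procedure `ED`: from state `i` with accumulated
set `acc`, output `acc` if `i ≥ m`; otherwise either include `i` and jump to
`i + t + 1`, or exclude `i` and move to `i + 1`. -/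
def EDrun (m t : ℕ) (i : ℕ) (acc : Finset ℕ) : List (Finset ℕ) :=
  if h : m ≤ i then [acc]
  else EDrun m t (i + t + 1) (insert i acc) ++ EDrun m t (i + 1) acc
termination_by m - i
decreasing_by all_goals omega

/-! The outputs of `EDrun m t i ∅` are the subsets of `[i, m)` whose gaps exceed `t`: such a set
either contains `i`, and then its other elements lie in `[i + t + 1, m)` (first branch), or it
lies in `[i + 1, m)` (second branch). Membership of `i` also separates the two branches, and
inserting `i` is injective on sets not containing it, so no set is output twice. The
accumulator is merely joined to every output. -/

def GapsExceed (t : ℕ) (S : Finset ℕ) : Prop :=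
  ∀ a ∈ S, ∀ b ∈ S, a < b → t < b - a

namespace GapsExceed

variable {t : ℕ} {S T : Finset ℕ}

theorem empty : GapsExceed t ∅ := by simp [GapsExceed]

theorem mono (h : GapsExceed t T) (hST : S ⊆ T) : GapsExceed t S :=
  fun a ha b hb => h a (hST ha) b (hST hb)

theorem insert {i : ℕ} (h : GapsExceed t T) (hT : ∀ x ∈ T, i + t < x) :
    GapsExceed t (insert i T) := by
  intro a ha b hb hab
  rw [Finset.mem_insert] at ha hb
  rcases ha with rfl | ha <;> rcases hb with rfl | hb
  · omega
  · have := hT b hb; omega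
  · have := hT a ha; omega
  · exact h a ha b hb hab

end GapsExceed

open Finset

section EDrun

variable {m t i : ℕ}

theorem EDrun_of_le (h : m ≤ i) (acc : Finset ℕ) : EDrun m t i acc = [acc] := by
  rw [EDrun, dif_pos h]

theorem EDrun_of_lt (h : i < m) (acc : Finset ℕ) :
    EDrun m t i acc = EDrun m t (i + t + 1) (insert i acc) ++ EDrun m t (i + 1) acc := by
  rw [EDrun, dif_neg (by omega)]

theorem EDrun_eq_map_union (m t i : ℕ) (acc : Finset ℕ) :
    EDrun m t i acc = (EDrun m t i ∅).map (· ∪ acc) := by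
  by_cases h : m ≤ i
  · simp [EDrun_of_le h]
  · have hi : i < m := by omega
    rw [EDrun_of_lt hi, EDrun_of_lt hi, EDrun_eq_map_union m t (i + t + 1),
      EDrun_eq_map_union m t (i + t + 1) (insert i ∅), EDrun_eq_map_union m t (i + 1) acc]
    simp [Function.comp_def, Finset.union_insert]
termination_by m - i

theorem EDrun_empty_of_lt (h : i < m) :
    EDrun m t i ∅ = (EDrun m t (i + t + 1) ∅).map (insert i) ++ EDrun m t (i + 1) ∅ := by
  rw [EDrun_of_lt h, EDrun_eq_map_union m t (i + t + 1) (insert i ∅)]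
  simp

theorem subset_Ico_gapsExceed_iff (h : i < m) (S : Finset ℕ) :
    S ⊆ Ico i m ∧ GapsExceed t S ↔
      (∃ T, (T ⊆ Ico (i + t + 1) m ∧ GapsExceed t T) ∧ insert i T = S) ∨
        (S ⊆ Ico (i + 1) m ∧ GapsExceed t S) := by
  constructor
  · rintro ⟨hS, hsep⟩
    by_cases hiS : i ∈ S
    · refine .inl ⟨S.erase i, ⟨fun x hx => ?_, hsep.mono (erase_subset i S)⟩, insert_erase hiS⟩
      obtain ⟨hxi, hxS⟩ := mem_erase.1 hx
      have hx' := mem_Ico.1 (hS hxS)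
      have := hsep i hiS x hxS (by omega)
      exact mem_Ico.2 ⟨by omega, hx'.2⟩
    · refine .inr ⟨fun x hx => ?_, hsep⟩
      have := mem_Ico.1 (hS hx)
      exact mem_Ico.2 ⟨lt_of_le_of_ne this.1 (ne_of_mem_of_not_mem hx hiS).symm, this.2⟩
  · rintro (⟨T, ⟨hT, hsep⟩, rfl⟩ | ⟨hS, hsep⟩)
    · refine ⟨insert_subset (mem_Ico.2 ⟨le_rfl, h⟩) (hT.trans (Ico_subset_Ico (by omega) le_rfl)),
        hsep.insert fun x hx => ?_⟩
      have := mem_Ico.1 (hT hx)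
      omega
    · exact ⟨hS.trans (Ico_subset_Ico (by omega) le_rfl), hsep⟩

theorem mem_EDrun_empty_iff (m t i : ℕ) (S : Finset ℕ) :
    S ∈ EDrun m t i ∅ ↔ S ⊆ Ico i m ∧ GapsExceed t S := by
  by_cases h : m ≤ i
  · rw [EDrun_of_le h, List.mem_singleton, Ico_eq_empty_of_le h, subset_empty]
    exact ⟨fun hS => ⟨hS, hS ▸ .empty⟩, And.left⟩
  · rw [EDrun_empty_of_lt (by omega), subset_Ico_gapsExceed_iff (by omega), List.mem_append,
      List.mem_map, mem_EDrun_empty_iff m t (i + 1)]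
    simp only [mem_EDrun_empty_iff m t (i + t + 1)]
termination_by m - i

theorem nodup_EDrun_empty (m t i : ℕ) : (EDrun m t i ∅).Nodup := by
  by_cases h : m ≤ i
  · simp [EDrun_of_le h]
  have not_mem_of_mem_jump : ∀ T ∈ EDrun m t (i + t + 1) ∅, i ∉ T := fun T hT hiT => by
    have := mem_Ico.1 (((mem_EDrun_empty_iff m t _ T).1 hT).1 hiT)
    omega
  rw [EDrun_empty_of_lt (by omega)]
  refine (nodup_EDrun_empty m t (i + t + 1)).map_on ?_ |>.append (nodup_EDrun_empty m t (i + 1)) ?_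
  · intro T hT T' hT' hTT'
    rw [← erase_insert (not_mem_of_mem_jump T hT), hTT', erase_insert (not_mem_of_mem_jump T' hT')]
  · rintro _ hS hS'
    obtain ⟨T, -, rfl⟩ := List.mem_map.1 hS
    have := mem_Ico.1 (((mem_EDrun_empty_iff m t _ _).1 hS').1 (mem_insert_self i T))
    omega
termination_by m - i

end EDrun

theorem stmt_16_general (m t : ℕ) :
    (EDrun m t (t + 1) ∅).Nodup ∧
    ∀ S : Finset ℕ, S ∈ EDrun m t (t + 1) ∅ ↔
      (S ⊆ Finset.Icc (t + 1) (m - 1) ∧ ∀ a ∈ S, ∀ b ∈ S, a < b → t < b - a) := by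
  have hIcc : Icc (t + 1) (m - 1) = Ico (t + 1) m := by
    ext x
    simp only [mem_Icc, mem_Ico]
    omega
  exact ⟨nodup_EDrun_empty m t (t + 1), fun S => hIcc ▸ mem_EDrun_empty_iff m t (t + 1) S⟩

theorem stmt_16 (m t : ℕ) (hm : t + 1 < m) :
    (EDrun m t (t + 1) ∅).Nodup ∧
    ∀ S : Finset ℕ, S ∈ EDrun m t (t + 1) ∅ ↔
      (S ⊆ Finset.Icc (t + 1) (m - 1) ∧ ∀ a ∈ S, ∀ b ∈ S, a < b → t < b - a) :=
  stmt_16_general m t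
end
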